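/- Let V ∈ L^∞(ℝ²), a_n ↑ a*, and let u_n be a minimizer of E_{a_n} with ‖u_n‖_{L²} = 1. If lim_n E_{a_n} = ess inf V, then ∫(|∇u_n|² − (a_n/2)|u_n|⁴) → 0 as n → ∞. -/

import Mathlib

open MeasureTheory Filter
open scoped Topology

noncomputable section

abbrev Plane : Type := EuclideanSpace ℝ (Fin 2)

/-- Membership in `H¹(ℝ²)` (with the natural integrability of the quartic term). -/
def H1 (u : Plane → ℝ) : Prop :=
  Differentiable ℝ u ∧ MemLp u 2 ∧ MemLp u 4 ∧ MemLp (fun x => fderiv ℝ u x) 2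

/-- The Gross-Pitaevskii energy functional `E_a(u) = ∫(|∇u|² + V|u|² − (a/2)|u|⁴)`. -/
def gpEnergy (V : Plane → ℝ) (a : ℝ) (u : Plane → ℝ) : ℝ :=
  (∫ x : Plane, ‖fderiv ℝ u x‖ ^ 2) + (∫ x : Plane, V x * (u x) ^ 2)
    - a / 2 * ∫ x : Plane, (u x) ^ 4

/-!
Since `V ≥ ess inf V` a.e. and `‖u_n‖₂ = 1`, the potential term of `E_{a_n}(u_n)` is at least
`ess inf V`, so `∫(|∇u_n|² − (a_n/2)|u_n|⁴) ≤ E_{a_n}(u_n) − ess inf V → 0`. On the other hand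
the Gagliardo–Nirenberg inequality with `a_n < a*` makes the same quantity nonnegative.
-/

section Potential

variable {α : Type*} [MeasurableSpace α] {μ : Measure α}

theorem const_mul_integral_le_integral_mul_of_ae_le {V w : α → ℝ} {c : ℝ}
    (hc : ∀ᵐ x ∂μ, c ≤ V x) (hw : 0 ≤ w) (hw_int : Integrable w μ)
    (hVw_int : Integrable (fun x => V x * w x) μ) :
    c * ∫ x, w x ∂μ ≤ ∫ x, V x * w x ∂μ := by
  rw [← integral_const_mul]
  refine integral_mono_ae (hw_int.const_mul c) hVw_int ?_
  filter_upwards [hc] with x hx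
  exact mul_le_mul_of_nonneg_right hx (hw x)

theorem le_integral_mul_sq_of_ae_le {V u : α → ℝ} {c C : ℝ}
    (hV : AEStronglyMeasurable V μ) (hV_bdd : ∀ᵐ x ∂μ, |V x| ≤ C)
    (hu : MemLp u 2 μ) (hu_norm : ∫ x, u x ^ 2 ∂μ = 1) (hc : ∀ᵐ x ∂μ, c ≤ V x) :
    c ≤ ∫ x, V x * u x ^ 2 ∂μ := by
  have hVu : Integrable (fun x => V x * u x ^ 2) μ := hu.integrable_sq.bdd_mul hV hV_bdd
  simpa [hu_norm] using
    const_mul_integral_le_integral_mul_of_ae_le hc (fun x => sq_nonneg (u x)) hu.integrable_sq hVu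

end Potential

theorem kinetic_sub_quartic_nonneg {E : Type*} [NormedAddCommGroup E] [NormedSpace ℝ E]
    [MeasurableSpace E] {μ : Measure E} {u : E → ℝ} {a astar : ℝ} (ha : a ≤ astar)
    (hGN : astar / 2 * ∫ x, u x ^ 4 ∂μ
      ≤ (∫ x, ‖fderiv ℝ u x‖ ^ 2 ∂μ) * ∫ x, u x ^ 2 ∂μ)
    (hu_norm : ∫ x, u x ^ 2 ∂μ = 1) :
    0 ≤ (∫ x, ‖fderiv ℝ u x‖ ^ 2 ∂μ) - a / 2 * ∫ x, u x ^ 4 ∂μ := by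
  have hQ : 0 ≤ ∫ x, u x ^ 4 ∂μ := integral_nonneg fun x => by positivity
  have : a / 2 * ∫ x, u x ^ 4 ∂μ ≤ astar / 2 * ∫ x, u x ^ 4 ∂μ := by gcongr
  rw [hu_norm, mul_one] at hGN
  linarith

theorem kinetic_sub_quartic_le_gpEnergy_sub {V u : Plane → ℝ} {a c : ℝ}
    (hc : c ≤ ∫ x, V x * u x ^ 2) :
    (∫ x, ‖fderiv ℝ u x‖ ^ 2) - a / 2 * ∫ x, u x ^ 4 ≤ gpEnergy V a u - c := by
  unfold gpEnergy
  linarith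

theorem blowup_kinetic_minus_quartic_tendsto_zero_general
    (V : Plane → ℝ) (hVmeas : Measurable V) (C : ℝ) (hVbdd : ∀ x, |V x| ≤ C)
    (astar : ℝ)
    (hGN : ∀ u : Plane → ℝ, H1 u →
      astar / 2 * ∫ x : Plane, (u x) ^ 4
        ≤ (∫ x : Plane, ‖fderiv ℝ u x‖ ^ 2) * ∫ x : Plane, (u x) ^ 2)
    (a : ℕ → ℝ) (ha : ∀ n, a n < astar)
    (u : ℕ → Plane → ℝ) (hu : ∀ n, H1 (u n))
    (hnorm : ∀ n, ∫ x : Plane, (u n x) ^ 2 = 1)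
    (c : ℝ) (hc : ∀ᵐ x : Plane, c ≤ V x)
    (hE : Tendsto (fun n => gpEnergy V (a n) (u n)) atTop (𝓝 c)) :
    Tendsto (fun n => (∫ x : Plane, ‖fderiv ℝ (u n) x‖ ^ 2)
      - a n / 2 * ∫ x : Plane, (u n x) ^ 4) atTop (𝓝 0) := by
  have hlower n := kinetic_sub_quartic_nonneg (ha n).le (hGN (u n) (hu n)) (hnorm n)
  have hupper n : _ ≤ gpEnergy V (a n) (u n) - c :=
    kinetic_sub_quartic_le_gpEnergy_sub <|
      le_integral_mul_sq_of_ae_le hVmeas.aestronglyMeasurable (.of_forall hVbdd)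
        (hu n).2.1 (hnorm n) hc
  have hgap : Tendsto (fun n => gpEnergy V (a n) (u n) - c) atTop (𝓝 0) := by
    simpa using hE.sub_const c
  exact tendsto_of_tendsto_of_tendsto_of_le_of_le tendsto_const_nhds hgap hlower hupper

/-- If `a_n ↑ a*`, `u_n` minimizes `E_{a_n}` among normalized `H¹` functions, and
`E_{a_n}(u_n) → ess inf V` (`c` being an essential lower bound of `V` with the energies
converging to it), then `∫(|∇u_n|² − (a_n/2)|u_n|⁴) → 0`. -/
theorem blowup_kinetic_minus_quartic_tendsto_zero
    (V : Plane → ℝ) (hVmeas : Measurable V) (C : ℝ) (hVbdd : ∀ x, |V x| ≤ C)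
    (astar : ℝ) (hastar : 0 < astar)
    (hGN : ∀ u : Plane → ℝ, H1 u →
      astar / 2 * ∫ x : Plane, (u x) ^ 4
        ≤ (∫ x : Plane, ‖fderiv ℝ u x‖ ^ 2) * ∫ x : Plane, (u x) ^ 2)
    (a : ℕ → ℝ) (ha0 : ∀ n, 0 < a n) (ha : ∀ n, a n < astar) (hmono : Monotone a)
    (haT : Tendsto a atTop (𝓝 astar))
    (u : ℕ → Plane → ℝ) (hu : ∀ n, H1 (u n))
    (hnorm : ∀ n, ∫ x : Plane, (u n x) ^ 2 = 1)
    (hmin : ∀ n, ∀ v : Plane → ℝ, H1 v → (∫ x : Plane, (v x) ^ 2) = 1 →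
      gpEnergy V (a n) (u n) ≤ gpEnergy V (a n) v)
    (c : ℝ) (hc : ∀ᵐ x : Plane, c ≤ V x)
    (hE : Tendsto (fun n => gpEnergy V (a n) (u n)) atTop (𝓝 c)) :
    Tendsto (fun n => (∫ x : Plane, ‖fderiv ℝ (u n) x‖ ^ 2)
      - a n / 2 * ∫ x : Plane, (u n x) ^ 4) atTop (𝓝 0) :=
  blowup_kinetic_minus_quartic_tendsto_zero_general V hVmeas C hVbdd astar hGN a ha u hu hnorm c hc
    hE
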